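/- Let Γ' be a chordal graph on vertex set {2,…,n} such that 2,3,…,n is a perfect elimination order of Γ', and suppose that for every k ≥ 0 the k-th homological shift ideal HS_k(I((Γ')^c)) ⊆ K[x_2,…,x_n] has linear quotients. Fix i ∈ {2,…,n} and let Γ be the whisker graph on [n] with edge set E(Γ) = E(Γ') ∪ {{1,i}}, and set G = Γ^c. Then 1,2,…,n is a perfect elimination order of Γ = G^c, and for every k ≥ 0 the ideal HS_k(I(G)) ⊆ K[x_1,…,x_n] has linear quotients. -/

import Mathlib

open MvPolynomial

/-- An ideal of `K[x_1,…,x_n]` is *generated by variables* if it is the span of the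
image of a subset of the variables. -/
def genByVars {K : Type*} [Field K] {n : ℕ} (I : Ideal (MvPolynomial (Fin n) K)) : Prop :=
  ∃ T : Set (Fin n), I = Ideal.span (MvPolynomial.X '' T)
/-- A polynomial is a monomial (with coefficient `1`). -/
def IsMonomialElt {K : Type*} [Field K] {n : ℕ} (p : MvPolynomial (Fin n) K) : Prop :=
  ∃ a : Fin n →₀ ℕ, p = MvPolynomial.monomial a 1
/-- A monomial ideal has *linear quotients* if its minimal monomial generators admit an
ordering `u 0, u 1, …` such that each colon ideal `(u_0,…,u_{i-1}) : u_i` is generated by a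
subset of the variables.  (The conditions that the `u i` are monomials, pairwise
non-dividing, and generate `I` say exactly that they are the minimal monomial generators
of `I`.) -/
def HasLinearQuotients {K : Type*} [Field K] {n : ℕ}
    (I : Ideal (MvPolynomial (Fin n) K)) : Prop :=
  ∃ (m : ℕ) (u : Fin m → MvPolynomial (Fin n) K),
    (∀ i, IsMonomialElt (u i)) ∧
    (∀ i j, i ≠ j → ¬ u i ∣ u j) ∧
    Ideal.span (Set.range u) = I ∧
    ∀ i : Fin m,
      genByVars ((Ideal.span (u '' {j | j < i})).colon (Ideal.span {u i}))
/-- The natural ordering `1, 2, …, n` of the vertices is a perfect elimination order of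
`H`: for each vertex, its neighbourhood among the later vertices is a clique. -/
def natPEO {n : ℕ} (H : SimpleGraph (Fin n)) : Prop :=
  ∀ i j k : Fin n, i < j → i < k → j ≠ k → H.Adj i j → H.Adj i k → H.Adj j k

/-- The reversed ordering `n, n-1, …, 1` of the vertices is a perfect elimination order of
`H`: for each vertex, its neighbourhood among the earlier-labelled vertices is a clique. -/
def revPEO {n : ℕ} (H : SimpleGraph (Fin n)) : Prop :=
  ∀ i j k : Fin n, j < i → k < i → j ≠ k → H.Adj i j → H.Adj i k → H.Adj j k
/-- The generating monomials of the `k`-th homological shift ideal `HS_k(I(G))`: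
all monomials `x_A x_B` with `A, B` nonempty, `max A < min B`, `|A ∪ B| = k + 2` and
`{max A, b} ∈ E(G)` for all `b ∈ B`. -/
def HSgens (K : Type*) [Field K] {n : ℕ} (G : SimpleGraph (Fin n)) (k : ℕ) :
    Set (MvPolynomial (Fin n) K) :=
  {w | ∃ A B : Finset (Fin n), A.Nonempty ∧ B.Nonempty ∧
    (∀ a ∈ A, ∀ b ∈ B, a < b) ∧ (A ∪ B).card = k + 2 ∧
    (∃ a0 ∈ A, (∀ a ∈ A, a ≤ a0) ∧ ∀ b ∈ B, G.Adj a0 b) ∧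
    w = (∏ i ∈ A, MvPolynomial.X i) * ∏ i ∈ B, MvPolynomial.X i}
/-- A graph is *chordal* if it has no induced cycle of length greater than three,
i.e. every cycle of length at least four has a chord. -/
def IsChordal {V : Type*} (G : SimpleGraph V) : Prop :=
  ∀ m : ℕ, 4 ≤ m → ∀ f : ZMod m → V, Function.Injective f →
    (∀ i, G.Adj (f i) (f (i + 1))) →
      ∃ i j : ZMod m, G.Adj (f i) (f j) ∧ i ≠ j ∧ i + 1 ≠ j ∧ j + 1 ≠ i
/-- The whisker graph of `Γ'` (a graph on the vertices `1,…,n`, encoded as `Fin n` and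
embedded via `Fin.succ` into the later `n` vertices of `Fin (n+1)`), obtained by adding
the new vertex `0` together with the single whisker edge `{0, i.succ}`. -/
def whiskerGraph {n : ℕ} (Γ' : SimpleGraph (Fin n)) (i : Fin n) :
    SimpleGraph (Fin (n + 1)) where
  Adj u v := (∃ a b : Fin n, Γ'.Adj a b ∧ u = a.succ ∧ v = b.succ) ∨
    (u = 0 ∧ v = i.succ) ∨ (u = i.succ ∧ v = 0)
  symm := by
    constructor
    intro u v h
    rcases h with ⟨a, b, hab, hu, hv⟩ | ⟨hu, hv⟩ | ⟨hu, hv⟩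
    · exact Or.inl ⟨b, a, hab.symm, hv, hu⟩
    · exact Or.inr (Or.inr ⟨hv, hu⟩)
    · exact Or.inr (Or.inl ⟨hv, hu⟩)
  loopless := by
    constructor
    intro u h
    rcases h with ⟨a, b, hab, hu, hv⟩ | ⟨hu, hv⟩ | ⟨hu, hv⟩
    · exact hab.ne (Fin.succ_injective _ (hu.symm.trans hv))
    · exact (Fin.succ_ne_zero i) (hv.symm.trans hu)
    · exact (Fin.succ_ne_zero i) (hu.symm.trans hv)

/-!
A generator `x_A x_B` of `HS_k(I(H))` is a squarefree monomial `x_S`, `|S| = k + 2`, with a pivot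
`t = max A ∈ S` that is `H`-adjacent to every later vertex of `S`. For squarefree monomials of one
degree, an order has linear quotients exactly when for every `S` and every earlier `T` there is a
`v ∈ T \ S` and an earlier `L` with `L \ S = {v}`; the colon ideal of `x_S` is then generated by
these variables `x_v`.

In `G = Γᶜ` the new vertex `0` is adjacent to every vertex except `i`, so the supports of
`HS_k(I(G))` are the sets `{0} ∪ A` with `|A| = k + 1` and `i ∉ A` (then `0` is a pivot), the sets
`{0} ∪ A` with `A` a support of `HS_{k-1}(I(Γ'ᶜ))`, and the supports of `HS_k(I(Γ'ᶜ))`. Take them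
in this order: the first block colexicographically, the rest by the linear quotient orders given
by the hypothesis. Between the first two blocks the exchange trades `i` for a vertex of the
earlier set; a support `A` of the last block is completed by `x_0`, since `{0} ∪ A \ {w}`
(with `w = i` if `i ∈ A`) lies in the first two blocks. The perfect elimination order is
immediate, the whisker `{0, i}` being the only edge at `0`.
-/

open Finset

section SquarefreeMonomial

variable {σ R : Type*} [CommSemiring R]

lemma sum_single_one_apply [DecidableEq σ] (S : Finset σ) (w : σ) :
    (∑ v ∈ S, Finsupp.single v 1 : σ →₀ ℕ) w = if w ∈ S then 1 else 0 := by
  simp [Finsupp.finsetSum_apply, Finsupp.single_apply]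

lemma prod_X_eq_monomial (S : Finset σ) :
    (∏ v ∈ S, X v : MvPolynomial σ R) = monomial (∑ v ∈ S, Finsupp.single v 1) 1 :=
  (monomial_sum_one S _).symm

variable [Nontrivial R]

lemma mem_support_monomial_one (a : σ →₀ ℕ) : a ∈ (monomial a (1 : R)).support :=
  by classical exact mem_support_iff.mpr (by rw [coeff_monomial, if_pos rfl]; exact one_ne_zero)

lemma exists_mem_dvd_of_monomial_mem_span {s : Set (MvPolynomial σ R)}
    (hs : ∀ p ∈ s, ∃ e, p = monomial e 1) {a : σ →₀ ℕ} (h : monomial a (1 : R) ∈ Ideal.span s) :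
    ∃ p ∈ s, p ∣ monomial a 1 := by
  have hs' : s = (fun e => monomial e (1 : R)) '' {e | monomial e 1 ∈ s} := by
    ext p
    refine ⟨fun hp => ?_, fun ⟨e, he, hep⟩ => hep ▸ he⟩
    obtain ⟨e, rfl⟩ := hs p hp
    exact ⟨e, hp, rfl⟩
  rw [hs', mem_ideal_span_monomial_image] at h
  obtain ⟨e, he, hle⟩ := h a (mem_support_monomial_one a)
  exact ⟨_, he, monomial_dvd_monomial.mpr ⟨Or.inr hle, one_dvd _⟩⟩

lemma monomial_one_dvd_antisymm {a b : σ →₀ ℕ} (hab : monomial a (1 : R) ∣ monomial b 1)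
    (hba : monomial b (1 : R) ∣ monomial a 1) : monomial a (1 : R) = monomial b 1 := by
  rw [monomial_dvd_monomial] at hab hba
  rw [le_antisymm (hab.1.resolve_left one_ne_zero) (hba.1.resolve_left one_ne_zero)]

lemma subset_of_span_eq_of_isAntichain {s t : Set (MvPolynomial σ R)}
    (hs : ∀ p ∈ s, ∃ e, p = monomial e 1) (ht : ∀ q ∈ t, ∃ e, q = monomial e 1)
    (hs' : IsAntichain (· ∣ ·) s) (hst : Ideal.span s = Ideal.span t) : s ⊆ t := by
  intro p hp
  obtain ⟨a, rfl⟩ := hs p hp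
  obtain ⟨q, hq, hqp⟩ := exists_mem_dvd_of_monomial_mem_span ht (hst ▸ Ideal.subset_span hp)
  obtain ⟨b, rfl⟩ := ht q hq
  obtain ⟨p', hp', hp'q⟩ := exists_mem_dvd_of_monomial_mem_span hs (hst ▸ Ideal.subset_span hq)
  obtain rfl := hs'.eq hp' hp (hp'q.trans hqp)
  rwa [monomial_one_dvd_antisymm hp'q hqp]

lemma prod_X_dvd_prod_X_iff {L M : Finset σ} :
    (∏ v ∈ L, X v : MvPolynomial σ R) ∣ ∏ v ∈ M, X v ↔ L ⊆ M := by
  classical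
  refine ⟨fun h v hv => ?_, prod_dvd_prod_of_subset L M X⟩
  rw [prod_X_eq_monomial, prod_X_eq_monomial, monomial_dvd_monomial] at h
  have := h.1.resolve_left one_ne_zero v
  simp only [sum_single_one_apply, if_pos hv] at this
  by_contra hvM
  simp [hvM] at this

lemma prod_X_injective :
    Function.Injective (fun S => ∏ v ∈ S, X v : Finset σ → MvPolynomial σ R) :=
  fun _ _ h => subset_antisymm (prod_X_dvd_prod_X_iff.mp (dvd_of_eq h))
    (prod_X_dvd_prod_X_iff.mp (dvd_of_eq h.symm))

lemma isAntichain_dvd_image_prod_X {𝒮 : Set (Finset σ)} (h𝒮 : IsAntichain (· ⊆ ·) 𝒮) :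
    IsAntichain (· ∣ ·) ((fun S => ∏ v ∈ S, X v : Finset σ → MvPolynomial σ R) '' 𝒮) :=
  h𝒮.image _ fun _ _ => prod_X_dvd_prod_X_iff.mp

lemma prod_X_mem_span_prod_X_iff {𝒯 : Set (Finset σ)} {M : Finset σ} :
    (∏ v ∈ M, X v : MvPolynomial σ R) ∈ Ideal.span ((fun L => ∏ v ∈ L, X v) '' 𝒯) ↔
      ∃ L ∈ 𝒯, L ⊆ M := by
  refine ⟨fun h => ?_, fun ⟨L, hL, hLM⟩ =>
    Ideal.mem_of_dvd _ (prod_X_dvd_prod_X_iff.mpr hLM) (Ideal.subset_span ⟨L, hL, rfl⟩)⟩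
  rw [prod_X_eq_monomial] at h
  obtain ⟨_, ⟨L, hL, rfl⟩, hdvd⟩ := exists_mem_dvd_of_monomial_mem_span
    (by rintro _ ⟨L, -, rfl⟩; exact ⟨_, prod_X_eq_monomial L⟩) h
  rw [← prod_X_eq_monomial, prod_X_dvd_prod_X_iff] at hdvd
  exact ⟨L, hL, hdvd⟩

end SquarefreeMonomial

section Exchange

variable {V : Type*} [DecidableEq V] {L S : Finset V} {a v : V}

lemma subset_insert_iff_sdiff_subset_singleton : L ⊆ insert v S ↔ L \ S ⊆ {v} := by
  rw [insert_eq]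
  exact sdiff_le_iff'.symm

lemma card_insert_erase_of_notMem (hv : v ∉ S) (ha : a ∈ S) :
    (insert v (S.erase a)).card = S.card := by
  rw [card_insert_of_notMem (fun h => hv (mem_of_mem_erase h)), card_erase_add_one ha]

lemma insert_erase_sdiff_self (hv : v ∉ S) : insert v (S.erase a) \ S = {v} := by
  ext w
  simp only [mem_sdiff, mem_insert, mem_erase, mem_singleton]
  constructor
  · rintro ⟨rfl | ⟨-, hw⟩, hwS⟩
    · rfl
    · exact absurd hw hwS
  · rintro rfl
    exact ⟨Or.inl rfl, hv⟩

end Exchange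

section Colon

variable {K : Type*} [Field K] {N : ℕ} {𝒯 : Set (Finset (Fin N))} {S : Finset (Fin N)}

lemma span_prod_X_image_eq_span_monomial :
    Ideal.span ((fun L => ∏ v ∈ L, X v) '' 𝒯 : Set (MvPolynomial (Fin N) K)) =
      Ideal.span ((fun e => monomial e 1) '' ((fun L => ∑ v ∈ L, Finsupp.single v 1) '' 𝒯)) := by
  rw [Set.image_image]
  simp only [prod_X_eq_monomial]

lemma colon_span_prod_X_eq_span_X (hstep : ∀ T ∈ 𝒯, ∃ v ∈ T \ S, ∃ L ∈ 𝒯, L \ S = {v}) :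
    (Ideal.span ((fun L => ∏ v ∈ L, X v) '' 𝒯 : Set (MvPolynomial (Fin N) K))).colon
        (Ideal.span {(∏ v ∈ S, X v : MvPolynomial (Fin N) K)}) =
      Ideal.span (X '' {v | ∃ L ∈ 𝒯, L \ S = {v}}) := by
  classical
  refine le_antisymm (fun p hp => ?_) (Ideal.span_le.mpr ?_)
  · rw [Ideal.mem_colon_span_singleton, span_prod_X_image_eq_span_monomial, prod_X_eq_monomial,
      mem_ideal_span_monomial_image] at hp
    rw [mem_ideal_span_X_image]
    intro b hb
    have hbS : b + ∑ v ∈ S, Finsupp.single v 1 ∈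
        (p * monomial (∑ v ∈ S, Finsupp.single v 1) 1).support := by
      rw [mem_support_iff, coeff_mul_monomial, mul_one]
      exact mem_support_iff.mp hb
    obtain ⟨_, ⟨T, hT, rfl⟩, hle⟩ := hp _ hbS
    obtain ⟨v, hv, hvstep⟩ := hstep T hT
    refine ⟨v, hvstep, fun hbv => ?_⟩
    have := hle v
    simp only [Finsupp.add_apply, sum_single_one_apply, if_pos (mem_sdiff.mp hv).1,
      if_neg (mem_sdiff.mp hv).2, hbv] at this
    omega
  · rintro _ ⟨v, ⟨L, hL, hLS⟩, rfl⟩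
    have hvS : v ∉ S := (mem_sdiff.mp (hLS ▸ mem_singleton_self v)).2
    rw [SetLike.mem_coe, Ideal.mem_colon_span_singleton, ← prod_insert hvS,
      prod_X_mem_span_prod_X_iff]
    exact ⟨L, hL, subset_insert_iff_sdiff_subset_singleton.mpr hLS.subset⟩

lemma exists_sdiff_eq_singleton_of_genByVars_colon (h𝒯 : ∀ L ∈ 𝒯, ¬ L ⊆ S)
    (h : genByVars ((Ideal.span ((fun L => ∏ v ∈ L, X v) '' 𝒯 :
      Set (MvPolynomial (Fin N) K))).colon (Ideal.span {(∏ v ∈ S, X v : MvPolynomial (Fin N) K)})))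
    {T : Finset (Fin N)} (hT : T ∈ 𝒯) : ∃ v ∈ T \ S, ∃ L ∈ 𝒯, L \ S = {v} := by
  classical
  obtain ⟨T₀, hT₀⟩ := h
  have hmem : ∀ q : MvPolynomial (Fin N) K, q * ∏ v ∈ S, X v ∈
      Ideal.span ((fun L => ∏ v ∈ L, X v) '' 𝒯) → q ∈ Ideal.span (X '' T₀) := fun q hq => by
    rwa [← hT₀, Ideal.mem_colon_span_singleton]
  have hTS := hmem (∏ v ∈ T \ S, X v : MvPolynomial (Fin N) K) <| by
    rw [← prod_union sdiff_disjoint, prod_X_mem_span_prod_X_iff]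
    exact ⟨T, hT, by rw [sdiff_union_self_eq_union]; exact subset_union_left⟩
  rw [prod_X_eq_monomial, mem_ideal_span_X_image] at hTS
  obtain ⟨v, hvT₀, hv⟩ := hTS _ (mem_support_monomial_one _)
  have hvTS : v ∈ T \ S := by
    by_contra h
    simp [sum_single_one_apply, h] at hv
  have hXv : (X v * ∏ v ∈ S, X v : MvPolynomial (Fin N) K) ∈
      Ideal.span ((fun L => ∏ v ∈ L, X v) '' 𝒯) := by
    rw [← Ideal.mem_colon_span_singleton, hT₀]
    exact Ideal.subset_span ⟨v, hvT₀, rfl⟩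
  rw [← prod_insert (mem_sdiff.mp hvTS).2, prod_X_mem_span_prod_X_iff] at hXv
  obtain ⟨L, hL, hLS⟩ := hXv
  exact ⟨v, hvTS, L, hL, (sdiff_nonempty.mpr (h𝒯 L hL)).subset_singleton_iff.mp
    (subset_insert_iff_sdiff_subset_singleton.mp hLS)⟩

end Colon

/-- Ordering `𝒮` by increasing `r` has the exchange property that characterises linear quotients
of the squarefree monomials `x_S`, `S ∈ 𝒮`. -/
structure IsLinearQuotientRanking {V ι : Type*} [DecidableEq V] [LT ι] (𝒮 : Set (Finset V))
    (r : Finset V → ι) : Prop where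
  injOn : Set.InjOn r 𝒮
  exists_sdiff_eq_singleton : ∀ S ∈ 𝒮, ∀ T ∈ 𝒮, r T < r S →
    ∃ v ∈ T \ S, ∃ L ∈ 𝒮, r L < r S ∧ L \ S = {v}

namespace IsLinearQuotientRanking

variable {V W ι κ : Type*} [DecidableEq V]

lemma empty [LT ι] (r : Finset V → ι) : IsLinearQuotientRanking ∅ r :=
  ⟨Set.injOn_empty r, fun _ h => h.elim⟩

lemma toColex_sized [LinearOrder V] (d : ℕ) (U : Set V) :
    IsLinearQuotientRanking {A : Finset V | A.card = d ∧ ↑A ⊆ U} toColex := by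
  refine ⟨toColex.injective.injOn, ?_⟩
  rintro S ⟨hS, hSU⟩ T ⟨hT, hTU⟩ hTS
  obtain ⟨a, haS, haT, hmax⟩ := Colex.toColex_lt_toColex_iff_exists_forall_lt.mp hTS
  obtain ⟨v, hv⟩ : (T \ S).Nonempty := by
    rw [sdiff_nonempty]
    intro hsub
    exact haT ((eq_of_subset_of_card_le hsub (by rw [hS, hT])) ▸ haS)
  obtain ⟨hvT, hvS⟩ := mem_sdiff.mp hv
  have hva : v ≠ a := fun h => hvS (h ▸ haS)
  refine ⟨v, hv, insert v (S.erase a), ⟨card_insert_erase_of_notMem hvS haS ▸ hS, ?_⟩, ?_,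
    insert_erase_sdiff_self hvS⟩
  · rw [coe_insert, Set.insert_subset_iff]
    exact ⟨hTU hvT, (coe_subset.mpr (erase_subset a S)).trans hSU⟩
  · refine Colex.toColex_lt_toColex_iff_exists_forall_lt.mpr ⟨a, haS, by simp [hva.symm],
      fun b hb hbS => ?_⟩
    obtain rfl | hb := mem_insert.mp hb
    · exact hmax b hvT hvS
    · exact absurd (mem_of_mem_erase hb) hbS

lemma append [LT ι] [LT κ] {𝒜 ℬ : Set (Finset V)} [DecidablePred (· ∈ 𝒜)]
    {rA : Finset V → ι} {rB : Finset V → κ}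
    (hA : IsLinearQuotientRanking 𝒜 rA) (hB : IsLinearQuotientRanking ℬ rB)
    (hcross : ∀ S ∈ ℬ, S ∉ 𝒜 → ∀ T ∈ 𝒜, ∃ v ∈ T \ S, ∃ L ∈ 𝒜, L \ S = {v}) :
    IsLinearQuotientRanking (𝒜 ∪ ℬ)
      (fun S => if S ∈ 𝒜 then toLex (Sum.inl (rA S)) else toLex (Sum.inr (rB S))) := by
  constructor
  · rintro S hS T hT hST
    by_cases hSA : S ∈ 𝒜 <;> by_cases hTA : T ∈ 𝒜 <;> simp only [hSA, hTA, if_true, if_false,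
      toLex_inj, Sum.inl.injEq, Sum.inr.injEq, reduceCtorEq] at hST
    · exact hA.injOn hSA hTA hST
    · exact hB.injOn (hS.resolve_left hSA) (hT.resolve_left hTA) hST
  · rintro S hS T hT hTS
    by_cases hSA : S ∈ 𝒜
    · have hTA : T ∈ 𝒜 := by
        by_contra hTA
        simp only [hSA, hTA, if_true, if_false] at hTS
        exact Sum.Lex.not_inr_lt_inl hTS
      simp only [hSA, hTA, if_true, Sum.Lex.inl_lt_inl_iff] at hTS
      obtain ⟨v, hv, L, hL, hLS, hLv⟩ := hA.exists_sdiff_eq_singleton S hSA T hTA hTS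
      exact ⟨v, hv, L, Or.inl hL, by simpa [hL, hSA] using hLS, hLv⟩
    · by_cases hTA : T ∈ 𝒜
      · obtain ⟨v, hv, L, hL, hLv⟩ := hcross S (hS.resolve_left hSA) hSA T hTA
        exact ⟨v, hv, L, Or.inl hL, by simp [hL, hSA], hLv⟩
      · simp only [hSA, hTA, if_false, Sum.Lex.inr_lt_inr_iff] at hTS
        obtain ⟨v, hv, L, hL, hLS, hLv⟩ := hB.exists_sdiff_eq_singleton S
          (hS.resolve_left hSA) T (hT.resolve_left hTA) hTS
        refine ⟨v, hv, L, Or.inr hL, ?_, hLv⟩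
        by_cases hLA : L ∈ 𝒜
        · simp [hLA, hSA]
        · simpa [hLA, hSA] using hLS

lemma exists_union_sized_notMem [LinearOrder V] [LT ι] {𝒜 : Set (Finset V)} {d : ℕ}
    {r : Finset V → ι} (h𝒜 : 𝒜.Sized d) (hA : IsLinearQuotientRanking 𝒜 r) (i : V) :
    ∃ r' : Finset V → Colex (Finset V) ⊕ₗ ι,
      IsLinearQuotientRanking ({A | A.card = d ∧ ↑A ⊆ ({i}ᶜ : Set V)} ∪ 𝒜) r' := by
  classical
  refine ⟨_, (toColex_sized d {i}ᶜ).append hA ?_⟩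
  rintro S hS hSV T ⟨hT, hTi⟩
  rw [Set.subset_compl_singleton_iff, mem_coe] at hTi
  have hiS : i ∈ S := by
    by_contra hiS
    exact hSV ⟨h𝒜 hS, Set.subset_compl_singleton_iff.mpr hiS⟩
  obtain ⟨v, hv⟩ : (T \ S).Nonempty := by
    rw [sdiff_nonempty]
    intro hsub
    exact hTi (eq_of_subset_of_card_le hsub (by rw [hT, h𝒜 hS]) ▸ hiS)
  obtain ⟨hvT, hvS⟩ := mem_sdiff.mp hv
  refine ⟨v, hv, insert v (S.erase i), ⟨card_insert_erase_of_notMem hvS hiS ▸ h𝒜 hS, ?_⟩,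
    insert_erase_sdiff_self hvS⟩
  simp only [coe_insert, coe_erase, Set.insert_subset_iff, Set.mem_compl_singleton_iff]
  exact ⟨fun h => hTi (h ▸ hvT), Set.sdiff_subset_compl _ _⟩

lemma image [LT ι] [DecidableEq W] {𝒜 : Set (Finset V)} {r : Finset V → ι}
    (h : IsLinearQuotientRanking 𝒜 r) (g : V ↪ W) (f : Finset V → Finset W)
    (hf : ∀ S T, f T \ f S = (T \ S).map g) :
    IsLinearQuotientRanking (f '' 𝒜) (r ∘ Function.invFun f) := by
  have hinj : f.Injective := fun S T hST => by
    have h₁ := hf S T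
    have h₂ := hf T S
    rw [hST, sdiff_self, bot_eq_empty, eq_comm, map_eq_empty, sdiff_eq_empty_iff_subset] at h₁ h₂
    exact subset_antisymm h₂ h₁
  have hinv : ∀ S, Function.invFun f (f S) = S := Function.leftInverse_invFun hinj
  constructor
  · rintro _ ⟨S, hS, rfl⟩ _ ⟨T, hT, rfl⟩ hST
    simp only [Function.comp_apply, hinv] at hST
    rw [h.injOn hS hT hST]
  · rintro _ ⟨S, hS, rfl⟩ _ ⟨T, hT, rfl⟩ hTS
    simp only [Function.comp_apply, hinv] at hTS
    obtain ⟨v, hv, L, hL, hLS, hLv⟩ := h.exists_sdiff_eq_singleton S hS T hT hTS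
    refine ⟨g v, ?_, f L, ⟨L, hL, rfl⟩, by simpa [hinv] using hLS, ?_⟩
    · rw [hf]
      exact mem_map_of_mem g hv
    · rw [hf, hLv, map_singleton]

end IsLinearQuotientRanking

lemma Set.Finite.exists_fin_enum_strictMono_comp {α ι : Type*} [Nonempty α] [LinearOrder ι]
    {s : Set α} (hs : s.Finite) {r : α → ι} (hr : s.InjOn r) :
    ∃ (m : ℕ) (f : Fin m → α), Set.range f = s ∧ StrictMono (r ∘ f) := by
  classical
  let e := (hs.image r).toFinset.orderIsoOfFin rfl
  have hmem : ∀ j, (e j : ι) ∈ r '' s := fun j => (hs.image r).mem_toFinset.mp (e j).2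
  refine ⟨_, fun j => Function.invFunOn r s (e j), ?_, fun j j' hjj' => ?_⟩
  · ext S
    refine ⟨?_, fun hS => ?_⟩
    · rintro ⟨j, rfl⟩
      exact (Function.invFunOn_pos (hmem j)).1
    · refine ⟨e.symm ⟨r S, (hs.image r).mem_toFinset.mpr ⟨S, hS, rfl⟩⟩, ?_⟩
      simp only [OrderIso.apply_symm_apply]
      exact hr.leftInvOn_invFunOn hS
  · simp only [Function.comp_apply, Function.invFunOn_eq (hmem j), Function.invFunOn_eq (hmem j')]
    exact e.strictMono hjj'

section Transfer

variable {K : Type*} [Field K] {N : ℕ}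

theorem IsLinearQuotientRanking.hasLinearQuotients {ι : Type*} [LinearOrder ι]
    {𝒮 : Set (Finset (Fin N))} {r : Finset (Fin N) → ι} (h : IsLinearQuotientRanking 𝒮 r)
    (h𝒮 : IsAntichain (· ⊆ ·) 𝒮) :
    HasLinearQuotients (Ideal.span ((fun S => ∏ v ∈ S, X v) '' 𝒮 :
      Set (MvPolynomial (Fin N) K))) := by
  obtain ⟨m, f, rfl, hmono⟩ := 𝒮.toFinite.exists_fin_enum_strictMono_comp h.injOn
  have hf : f.Injective := hmono.injective.of_comp
  refine ⟨m, fun j => ∏ v ∈ f j, X v, fun j => ⟨_, prod_X_eq_monomial _⟩, ?_, ?_, fun j => ?_⟩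
  · intro l j hlj hdvd
    exact hlj (hf (h𝒮.eq ⟨l, rfl⟩ ⟨j, rfl⟩ (prod_X_dvd_prod_X_iff.mp hdvd)))
  · rw [← Set.range_comp]
    rfl
  · rw [← Set.image_image (fun L => ∏ v ∈ L, X v) f]
    refine ⟨_, colon_span_prod_X_eq_span_X ?_⟩
    rintro _ ⟨l, hlj, rfl⟩
    obtain ⟨v, hv, _, ⟨l', rfl⟩, hl'j, hl'v⟩ :=
      h.exists_sdiff_eq_singleton (f j) ⟨j, rfl⟩ (f l) ⟨l, rfl⟩ (hmono hlj)
    exact ⟨v, hv, f l', ⟨l', hmono.lt_iff_lt.mp hl'j, rfl⟩, hl'v⟩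

lemma exists_fin_enum_of_hasLinearQuotients {𝒮 : Set (Finset (Fin N))}
    (h𝒮 : IsAntichain (· ⊆ ·) 𝒮)
    (h : HasLinearQuotients (Ideal.span ((fun S => ∏ v ∈ S, X v) '' 𝒮 :
      Set (MvPolynomial (Fin N) K)))) :
    ∃ (m : ℕ) (f : Fin m → Finset (Fin N)), f.Injective ∧ Set.range f = 𝒮 ∧
      ∀ j, genByVars ((Ideal.span ((fun l => ∏ v ∈ f l, X v) '' {l | l < j} :
        Set (MvPolynomial (Fin N) K))).colon
          (Ideal.span {(∏ v ∈ f j, X v : MvPolynomial (Fin N) K)})) := by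
  obtain ⟨m, u, hmon, hndvd, hspan, hcolon⟩ := h
  have hgens : ∀ p ∈ (fun S => ∏ v ∈ S, X v) '' 𝒮, ∃ e, p = monomial e (1 : K) := by
    rintro _ ⟨S, -, rfl⟩
    exact ⟨_, prod_X_eq_monomial S⟩
  have hmon' : ∀ p ∈ Set.range u, ∃ e, p = monomial e (1 : K) := by
    rintro _ ⟨j, rfl⟩
    exact hmon j
  have hu : Set.range u = (fun S => ∏ v ∈ S, X v) '' 𝒮 := by
    refine subset_antisymm (subset_of_span_eq_of_isAntichain hmon' hgens ?_ hspan)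
      (subset_of_span_eq_of_isAntichain hgens hmon' (isAntichain_dvd_image_prod_X h𝒮) hspan.symm)
    rintro _ ⟨i, rfl⟩ _ ⟨j, rfl⟩ hij
    exact hndvd i j (fun h => hij (congrArg u h))
  choose f hf𝒮 hfu using fun j => hu ▸ Set.mem_range_self (f := u) j
  obtain rfl : u = fun j => ∏ v ∈ f j, X v := funext fun j => (hfu j).symm
  refine ⟨m, f, fun i j hij => ?_, subset_antisymm (Set.range_subset_iff.mpr hf𝒮) fun S hS => ?_,
    hcolon⟩
  · by_contra hne
    exact hndvd i j hne (by simp only [hij, dvd_refl])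
  · obtain ⟨j, hj⟩ := hu.symm ▸ Set.mem_image_of_mem _ hS
    exact ⟨j, prod_X_injective (R := K) hj⟩

theorem exists_isLinearQuotientRanking_of_hasLinearQuotients {𝒮 : Set (Finset (Fin N))}
    (h𝒮 : IsAntichain (· ⊆ ·) 𝒮)
    (h : HasLinearQuotients (Ideal.span ((fun S => ∏ v ∈ S, X v) '' 𝒮 :
      Set (MvPolynomial (Fin N) K)))) :
    ∃ r : Finset (Fin N) → ℕ, IsLinearQuotientRanking 𝒮 r := by
  classical
  obtain ⟨m, f, hf, rfl, hcolon⟩ := exists_fin_enum_of_hasLinearQuotients h𝒮 h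
  let r : Finset (Fin N) → ℕ := fun S => if h : ∃ j, f j = S then h.choose else 0
  have hr : ∀ j, r (f j) = j := fun j => by
    have h : ∃ i, f i = f j := ⟨j, rfl⟩
    simp only [r, dif_pos h, hf h.choose_spec]
  refine ⟨r, ?_, ?_⟩
  · rintro _ ⟨i, rfl⟩ _ ⟨j, rfl⟩ hij
    rw [hr, hr] at hij
    rw [Fin.val_injective hij]
  · rintro _ ⟨j, rfl⟩ _ ⟨l, rfl⟩ hlj
    rw [hr, hr] at hlj
    have hcolon_j := hcolon j
    rw [← Set.image_image (fun L => ∏ v ∈ L, X v) f] at hcolon_j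
    have hnsub : ∀ L ∈ f '' {l | l < j}, ¬ L ⊆ f j := by
      rintro _ ⟨l, hl, rfl⟩ hsub
      exact (ne_of_lt hl) (hf (h𝒮.eq ⟨l, rfl⟩ ⟨j, rfl⟩ hsub))
    obtain ⟨v, hv, _, ⟨l', hl'j, rfl⟩, hl'v⟩ := exists_sdiff_eq_singleton_of_genByVars_colon
      hnsub hcolon_j ⟨l, Fin.lt_def.mpr hlj, rfl⟩
    exact ⟨v, hv, f l', ⟨l', rfl⟩, by rw [hr, hr]; exact hl'j, hl'v⟩

end Transfer

/-- The supports `A ∪ B` of the generators `x_A x_B` of `HS_{d-2}(I(H))`; the pivot `t` plays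
the role of `max A`. -/
def hsSupports {V : Type*} [LinearOrder V] (H : SimpleGraph V) (d : ℕ) : Set (Finset V) :=
  {S | S.card = d ∧ ∃ t ∈ S, (∃ s ∈ S, t < s) ∧ ∀ s ∈ S, t < s → H.Adj t s}

lemma HSgens_eq_image_hsSupports (K : Type*) [Field K] {n : ℕ} (H : SimpleGraph (Fin n))
    (k : ℕ) : HSgens K H k = (fun S => ∏ v ∈ S, X v) '' hsSupports H (k + 2) := by
  ext w
  constructor
  · rintro ⟨A, B, -, ⟨b, hb⟩, hAB, hcard, ⟨t, htA, htmax, htadj⟩, rfl⟩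
    refine ⟨A ∪ B, ⟨hcard, t, mem_union_left B htA, ⟨b, mem_union_right A hb, hAB t htA b hb⟩,
      fun s hs hts => ?_⟩, prod_union (disjoint_left.mpr fun a haA haB =>
        lt_irrefl a (hAB a haA a haB))⟩
    obtain hsA | hsB := mem_union.mp hs
    · exact absurd (htmax s hsA) (not_le.mpr hts)
    · exact htadj s hsB
  · rintro ⟨S, ⟨hcard, t, htS, ⟨s, hsS, hts⟩, hadj⟩, rfl⟩
    refine ⟨S.filter (· ≤ t), S.filter (fun x => ¬ x ≤ t), ⟨t, mem_filter.mpr ⟨htS, le_rfl⟩⟩,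
      ⟨s, mem_filter.mpr ⟨hsS, not_le.mpr hts⟩⟩,
      fun a ha b hb => (mem_filter.mp ha).2.trans_lt (not_le.mp (mem_filter.mp hb).2),
      (filter_union_filter_not_eq (p := (· ≤ t)) S).symm ▸ hcard,
      ⟨t, mem_filter.mpr ⟨htS, le_rfl⟩, fun a ha => (mem_filter.mp ha).2,
        fun b hb => hadj b (mem_filter.mp hb).1 (not_le.mp (mem_filter.mp hb).2)⟩,
      (prod_filter_mul_prod_filter_not S (· ≤ t) X).symm⟩

section hsSupports

variable {V W : Type*} [LinearOrder V] [LinearOrder W]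

lemma sized_hsSupports (H : SimpleGraph V) (d : ℕ) : (hsSupports H d).Sized d :=
  fun _ hS => hS.1

lemma hsSupports_one (H : SimpleGraph V) : hsSupports H 1 = ∅ := by
  refine Set.eq_empty_of_forall_notMem ?_
  rintro S ⟨hcard, t, htS, ⟨s, hsS, hts⟩, -⟩
  obtain ⟨x, rfl⟩ := card_eq_one.mp hcard
  rw [mem_singleton] at htS hsS
  exact hts.ne (htS.trans hsS.symm)

lemma map_mem_hsSupports_iff {G : SimpleGraph W} {H : SimpleGraph V} (g : V ↪o W)
    (hGH : ∀ a b, G.Adj (g a) (g b) ↔ H.Adj a b) {S : Finset V} {d : ℕ} :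
    S.map g.toEmbedding ∈ hsSupports G d ↔ S ∈ hsSupports H d := by
  simp [hsSupports, hGH]

lemma insert_mem_hsSupports_iff {H : SimpleGraph V} {S : Finset V} {m : V}
    (hm : ∀ s ∈ S, m < s) {d : ℕ} :
    insert m S ∈ hsSupports H (d + 1) ↔
      S.card = d ∧ ((S.Nonempty ∧ ∀ s ∈ S, H.Adj m s) ∨ S ∈ hsSupports H d) := by
  have hmS : m ∉ S := fun h => lt_irrefl m (hm m h)
  have hcard : (insert m S).card = d + 1 ↔ S.card = d := by
    rw [card_insert_of_notMem hmS, add_left_inj]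
  constructor
  · rintro ⟨hScard, t, htS, ⟨s, hs, hts⟩, hadj⟩
    refine ⟨hcard.mp hScard, ?_⟩
    obtain rfl | htS := mem_insert.mp htS
    · obtain rfl | hs := mem_insert.mp hs
      · exact absurd hts (lt_irrefl _)
      · exact Or.inl ⟨⟨s, hs⟩, fun s' hs' => hadj s' (mem_insert_of_mem hs') (hm s' hs')⟩
    · obtain hsm | hs := mem_insert.mp hs
      · exact absurd (hsm ▸ hts) (hm t htS).not_gt
      · exact Or.inr ⟨hcard.mp hScard, t, htS, ⟨s, hs, hts⟩,
          fun s' hs' => hadj s' (mem_insert_of_mem hs')⟩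
  · rintro ⟨hScard, ⟨⟨s, hs⟩, hadj⟩ | ⟨-, t, htS, ⟨s, hs, hts⟩, hadj⟩⟩
    · exact ⟨hcard.mpr hScard, m, mem_insert_self m S, ⟨s, mem_insert_of_mem hs, hm s hs⟩,
        fun s' hs' hms' => hadj s' ((mem_insert.mp hs').resolve_left hms'.ne')⟩
    · exact ⟨hcard.mpr hScard, t, mem_insert_of_mem htS, ⟨s, mem_insert_of_mem hs, hts⟩,
        fun s' hs' hts' => hadj s' ((mem_insert.mp hs').resolve_left
          fun h => (hm t htS).not_gt (h ▸ hts')) hts'⟩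

end hsSupports

section FinSucc

variable {n : ℕ}

lemma zero_notMem_map_succEmb (A : Finset (Fin n)) :
    (0 : Fin (n + 1)) ∉ A.map (Fin.succEmb n) := by
  simp [Fin.succ_ne_zero]

lemma exists_eq_map_succEmb_or_eq_insert_zero (S : Finset (Fin (n + 1))) :
    ∃ A : Finset (Fin n), S = A.map (Fin.succEmb n) ∨ S = insert 0 (A.map (Fin.succEmb n)) := by
  refine ⟨S.preimage Fin.succ (Fin.succ_injective n).injOn, ?_⟩
  by_cases h0 : 0 ∈ S
  · right
    ext x
    cases x using Fin.cases <;> simp [h0]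
  · left
    ext x
    cases x using Fin.cases <;> simp [h0]

lemma insert_zero_map_succEmb_sdiff (A B : Finset (Fin n)) :
    insert 0 (B.map (Fin.succEmb n)) \ insert 0 (A.map (Fin.succEmb n)) =
      (B \ A).map (Fin.succEmb n) := by
  rw [insert_sdiff_insert, sdiff_insert_of_notMem (by simp [Fin.succ_ne_zero]), Finset.map_sdiff]

lemma insert_zero_map_succEmb_inj {A B : Finset (Fin n)} :
    insert 0 (A.map (Fin.succEmb n)) = insert 0 (B.map (Fin.succEmb n)) ↔ A = B := by
  refine ⟨fun h => ?_, fun h => h ▸ rfl⟩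
  simpa [erase_insert (zero_notMem_map_succEmb _)] using congrArg (·.erase 0) h

end FinSucc

section Whisker

variable {n : ℕ} (Γ' : SimpleGraph (Fin n)) (i : Fin n)

lemma whiskerGraph_adj_succ_succ (a b : Fin n) :
    (whiskerGraph Γ' i).Adj a.succ b.succ ↔ Γ'.Adj a b := by
  simp [whiskerGraph, Fin.succ_ne_zero]

lemma whiskerGraph_adj_zero (v : Fin (n + 1)) : (whiskerGraph Γ' i).Adj 0 v ↔ v = i.succ := by
  simp [whiskerGraph, (Fin.succ_ne_zero _).symm]

lemma compl_whiskerGraph_adj_succ_succ (a b : Fin n) :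
    (whiskerGraph Γ' i)ᶜ.Adj a.succ b.succ ↔ Γ'ᶜ.Adj a b := by
  simp [whiskerGraph_adj_succ_succ]

lemma compl_whiskerGraph_adj_zero_succ (b : Fin n) :
    (whiskerGraph Γ' i)ᶜ.Adj 0 b.succ ↔ b ≠ i := by
  simp [whiskerGraph_adj_zero, (Fin.succ_ne_zero _).symm]

lemma natPEO_whiskerGraph {Γ' : SimpleGraph (Fin n)} (hPEO : natPEO Γ') :
    natPEO (whiskerGraph Γ' i) := by
  intro u v w huv huw hvw huv' huw'
  cases u using Fin.cases with
  | zero => exact absurd (((whiskerGraph_adj_zero Γ' i v).mp huv').trans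
      ((whiskerGraph_adj_zero Γ' i w).mp huw').symm) hvw
  | succ a =>
    cases v using Fin.cases with
    | zero => exact absurd huv (Fin.not_lt_zero _)
    | succ b =>
      cases w using Fin.cases with
      | zero => exact absurd huw (Fin.not_lt_zero _)
      | succ c =>
        simp only [whiskerGraph_adj_succ_succ, Fin.succ_lt_succ_iff, ne_eq, Fin.succ_inj]
          at huv huw hvw huv' huw' ⊢
        exact hPEO a b c huv huw hvw huv' huw'

lemma hsSupports_compl_whiskerGraph (k : ℕ) :
    hsSupports (whiskerGraph Γ' i)ᶜ (k + 2) =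
      (fun A => insert 0 (A.map (Fin.succEmb n))) ''
          ({A | A.card = k + 1 ∧ ↑A ⊆ ({i}ᶜ : Set (Fin n))} ∪ hsSupports Γ'ᶜ (k + 1)) ∪
        (fun A => A.map (Fin.succEmb n)) '' hsSupports Γ'ᶜ (k + 2) := by
  have hmap : ∀ {A : Finset (Fin n)} {d : ℕ},
      A.map (Fin.succEmb n) ∈ hsSupports (whiskerGraph Γ' i)ᶜ d ↔ A ∈ hsSupports Γ'ᶜ d :=
    map_mem_hsSupports_iff (Fin.succOrderEmb n) (compl_whiskerGraph_adj_succ_succ Γ' i)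
  ext S
  obtain ⟨A, rfl | rfl⟩ := exists_eq_map_succEmb_or_eq_insert_zero S
  · have hne : ∀ B : Finset (Fin n), insert 0 (B.map (Fin.succEmb n)) ≠ A.map (Fin.succEmb n) :=
      fun B h => zero_notMem_map_succEmb A (h ▸ mem_insert_self _ _)
    simp [hmap, hne]
  · rw [insert_mem_hsSupports_iff (by simp [Fin.succ_pos]), hmap]
    have hne : ∀ B : Finset (Fin n), B.map (Fin.succEmb n) ≠ insert 0 (A.map (Fin.succEmb n)) :=
      fun B h => zero_notMem_map_succEmb B (h ▸ mem_insert_self _ _)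
    simp only [Set.mem_union, Set.mem_image, insert_zero_map_succEmb_inj, hne, card_map,
      exists_eq_right, and_false, exists_false, or_false, Set.mem_ofPred_eq,
      Set.subset_compl_singleton_iff, mem_coe, map_nonempty, forall_mem_map, Fin.coe_succEmb,
      compl_whiskerGraph_adj_zero_succ]
    constructor
    · rintro ⟨hA, ⟨-, hi⟩ | hP⟩
      · exact Or.inl ⟨hA, fun h => hi i h rfl⟩
      · exact Or.inr hP
    · rintro (⟨hA, hi⟩ | hP)
      · exact ⟨hA, Or.inl ⟨card_pos.mp (by omega), fun a ha hai => hi (hai ▸ ha)⟩⟩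
      · exact ⟨hP.1, Or.inr hP⟩

theorem hasLinearQuotients_compl_whiskerGraph (K : Type*) [Field K] {ι κ : Type*}
    [LinearOrder ι] [LinearOrder κ] {k : ℕ} {rP : Finset (Fin n) → ι}
    {rQ : Finset (Fin n) → κ} (hP : IsLinearQuotientRanking (hsSupports Γ'ᶜ (k + 1)) rP)
    (hQ : IsLinearQuotientRanking (hsSupports Γ'ᶜ (k + 2)) rQ) :
    HasLinearQuotients (Ideal.span ((fun S => ∏ v ∈ S, X v) ''
      hsSupports (whiskerGraph Γ' i)ᶜ (k + 2) : Set (MvPolynomial (Fin (n + 1)) K))) := by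
  classical
  obtain ⟨r₀, h₀⟩ := hP.exists_union_sized_notMem (sized_hsSupports _ _) i
  have hanti := (sized_hsSupports (whiskerGraph Γ' i)ᶜ (k + 2)).isAntichain
  rw [hsSupports_compl_whiskerGraph] at hanti ⊢
  refine ((h₀.image (Fin.succEmb n) _ insert_zero_map_succEmb_sdiff).append
    (hQ.image (Fin.succEmb n) _ fun A B => (Finset.map_sdiff _ _).symm) ?_).hasLinearQuotients
    hanti
  rintro _ ⟨A, hA, rfl⟩ - _ ⟨B, -, rfl⟩
  -- `{0} ∪ A \ {w}` is an earlier support: once `i` is gone, `0` is a pivot.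
  obtain ⟨w, hwA, hiw⟩ : ∃ w ∈ A, i ∉ A.erase w := by
    by_cases hiA : i ∈ A
    · exact ⟨i, hiA, notMem_erase i A⟩
    · obtain ⟨w, hw⟩ := card_pos.mp (by rw [hA.1]; omega)
      exact ⟨w, hw, fun h => hiA (mem_of_mem_erase h)⟩
  refine ⟨0, mem_sdiff.mpr ⟨mem_insert_self _ _, zero_notMem_map_succEmb A⟩,
    insert 0 ((A.erase w).map (Fin.succEmb n)),
    ⟨A.erase w, Or.inl ⟨by rw [card_erase_of_mem hwA, hA.1]; rfl,
      Set.subset_compl_singleton_iff.mpr hiw⟩, rfl⟩, ?_⟩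
  rw [insert_sdiff_of_notMem _ (zero_notMem_map_succEmb A),
    sdiff_eq_empty_iff_subset.mpr (map_subset_map.mpr (erase_subset w A))]
  rfl

end Whisker

theorem HS_k_linearQuotients_of_whisker_general
    {K : Type*} [Field K] {n : ℕ} (Γ' : SimpleGraph (Fin n)) (i : Fin n)
    (hPEO : natPEO Γ')
    (hHS : ∀ k : ℕ, HasLinearQuotients (Ideal.span (HSgens K Γ'ᶜ k))) :
    natPEO (whiskerGraph Γ' i) ∧
    ∀ k : ℕ, HasLinearQuotients (Ideal.span (HSgens K (whiskerGraph Γ' i)ᶜ k)) := by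
  have hranking : ∀ k, ∃ r : Finset (Fin n) → ℕ,
      IsLinearQuotientRanking (hsSupports Γ'ᶜ (k + 2)) r := fun k => by
    have hk := hHS k
    rw [HSgens_eq_image_hsSupports] at hk
    exact exists_isLinearQuotientRanking_of_hasLinearQuotients
      (sized_hsSupports _ _).isAntichain hk
  refine ⟨natPEO_whiskerGraph i hPEO, fun k => ?_⟩
  obtain ⟨rQ, hQ⟩ := hranking k
  obtain ⟨rP, hP⟩ : ∃ r : Finset (Fin n) → ℕ,
      IsLinearQuotientRanking (hsSupports Γ'ᶜ (k + 1)) r := by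
    cases k with
    | zero => exact ⟨fun _ => 0, hsSupports_one Γ'ᶜ ▸ IsLinearQuotientRanking.empty _⟩
    | succ k => exact hranking k
  rw [HSgens_eq_image_hsSupports]
  exact hasLinearQuotients_compl_whiskerGraph Γ' i K hP hQ

/-- **Proposition 3.2 (Ficarra–Herzog).**  Let `Γ'` be a chordal graph on the vertex set
`{2,…,n}` (encoded as `Fin n`) whose natural order is a perfect elimination order, and
suppose that all homological shift ideals `HS_k(I((Γ')ᶜ))` have linear quotients.  Let
`Γ` be the whisker graph obtained from `Γ'` by adding the new vertex `1` (encoded as `0`)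
and the whisker `{1, i}`, and set `G = Γᶜ`.  Then the natural order is a perfect
elimination order of `Γ = Gᶜ`, and every `HS_k(I(G))` has linear quotients. -/
theorem HS_k_linearQuotients_of_whisker
    {K : Type*} [Field K] {n : ℕ} (Γ' : SimpleGraph (Fin n)) (i : Fin n)
    (hchordal : IsChordal Γ')
    (hPEO : natPEO Γ')
    (hHS : ∀ k : ℕ, HasLinearQuotients (Ideal.span (HSgens K Γ'ᶜ k))) :
    natPEO (whiskerGraph Γ' i) ∧
    ∀ k : ℕ, HasLinearQuotients (Ideal.span (HSgens K (whiskerGraph Γ' i)ᶜ k)) :=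
  HS_k_linearQuotients_of_whisker_general Γ' i hPEO hHS
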